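/- The matrices W_{9−,3} = (−1, −2/3; 3, 1) and W_{9−,−3} = (1, −2/3; 3, −1) both have determinant 1 and both normalize Γ_0(9): conjugation by either maps Γ_0(9) onto itself. -/
import Mathlib

open Matrix

/-- `Γ₀(N)` realized as a set of real 2×2 matrices: integer entries, determinant 1,
and lower-left entry divisible by `N`. -/
def Gamma0R (N : ℕ) : Set (Matrix (Fin 2) (Fin 2) ℝ) :=
  {A | (∀ i j, ∃ n : ℤ, A i j = (n : ℝ)) ∧ A.det = 1 ∧ ∃ m : ℤ, A 1 0 = (N : ℝ) * (m : ℝ)}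

noncomputable def W93 : Matrix (Fin 2) (Fin 2) ℝ := !![-1, -2/3; 3, 1]

noncomputable def W93' : Matrix (Fin 2) (Fin 2) ℝ := !![1, -2/3; 3, -1]

lemma W93_det : W93.det = 1 := by
  simp [W93, Matrix.det_fin_two_of]; norm_num

lemma W93'_det : W93'.det = 1 := by
  simp [W93', Matrix.det_fin_two_of]; norm_num

lemma W93_inv : W93⁻¹ = !![1, 2/3; -3, -1] := by
  apply Matrix.inv_eq_right_inv
  simp [W93, Matrix.mul_fin_two]
  rw [show (1 : Matrix (Fin 2) (Fin 2) ℝ) = !![1,0;0,1] from Matrix.one_fin_two]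
  norm_num

lemma W93'_inv : W93'⁻¹ = !![-1, 2/3; -3, 1] := by
  apply Matrix.inv_eq_right_inv
  simp [W93', Matrix.mul_fin_two]
  rw [show (1 : Matrix (Fin 2) (Fin 2) ℝ) = !![1,0;0,1] from Matrix.one_fin_two]
  norm_num

lemma W93_sq : W93 * W93 = -1 := by
  ext i j
  fin_cases i <;> fin_cases j <;> simp [W93, Matrix.mul_fin_two] <;> norm_num

lemma W93'_sq : W93' * W93' = -1 := by
  ext i j
  fin_cases i <;> fin_cases j <;> simp [W93', Matrix.mul_fin_two] <;> norm_num

lemma a_eq_d_mod3 (a b d m : ℤ) (h : a * d - b * (9 * m) = 1) : (3 : ℤ) ∣ a - d := by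
  have key : ∀ x y : ZMod 3, x * y = 1 → x - y = 0 := by decide
  have h3 : ((a : ZMod 3)) * d = 1 := by
    have := congrArg (fun n : ℤ => (n : ZMod 3)) h
    push_cast at this
    have h9 : ((9 : ℤ) : ZMod 3) = 0 := by decide
    push_cast at h9
    rw [show ((9:ZMod 3)) = 0 by decide] at this
    linear_combination this
  have := key _ _ h3
  have : ((a - d : ℤ) : ZMod 3) = 0 := by push_cast; exact this
  exact (ZMod.intCast_zmod_eq_zero_iff_dvd _ 3).mp this

lemma entries_eq (A : Matrix (Fin 2) (Fin 2) ℝ) (hA : A ∈ Gamma0R 9) :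
    ∃ a b d m : ℤ, A = !![(a : ℝ), b; 9 * m, d] ∧ a * d - b * (9 * m) = 1 := by
  obtain ⟨hint, hdet, m, hm⟩ := hA
  obtain ⟨a, ha⟩ := hint 0 0
  obtain ⟨b, hb⟩ := hint 0 1
  obtain ⟨d, hd⟩ := hint 1 1
  refine ⟨a, b, d, m, ?_, ?_⟩
  · rw [Matrix.eta_fin_two A, ha, hb, hd, hm]
    norm_num
  · have : (a : ℝ) * d - b * (9 * m) = 1 := by
      rw [Matrix.det_fin_two, ha, hb, hd, hm] at hdet
      push_cast at hdet ⊢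
      linarith [hdet]
    exact_mod_cast this

lemma conj_mem (A : Matrix (Fin 2) (Fin 2) ℝ) (hA : A ∈ Gamma0R 9) :
    W93⁻¹ * A * W93 ∈ Gamma0R 9 := by
  obtain ⟨a, b, d, m, hAeq, hdet⟩ := entries_eq A hA
  obtain ⟨k, hk⟩ := a_eq_d_mod3 a b d m hdet
  have ha : a = d + 3 * k := by omega
  subst ha
  subst hAeq
  rw [W93_inv]
  have hprod : !![(1:ℝ), 2/3; -3, -1] * !![((d + 3*k : ℤ) : ℝ), b; 9*m, d] * W93 =
      !![((-(d+3*k) + 3*b - 6*m + 2*d : ℤ) : ℝ), ((b - 2*k - 4*m : ℤ) : ℝ);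
         ((9*(k - b + m) : ℤ) : ℝ), ((2*(d+3*k) - 3*b + 6*m - d : ℤ) : ℝ)] := by
    ext i j
    fin_cases i <;> fin_cases j <;> simp [W93, Matrix.mul_fin_two] <;> push_cast <;> ring
  rw [hprod]
  refine ⟨?_, ?_, ⟨k - b + m, ?_⟩⟩
  · intro i j; fin_cases i <;> fin_cases j <;>
      [exact ⟨_, rfl⟩; exact ⟨_, rfl⟩; exact ⟨_, rfl⟩; exact ⟨_, rfl⟩]
  · rw [Matrix.det_fin_two_of]
    push_cast
    have : ((d:ℝ) + 3*k) * d - b * (9 * m) = 1 := by exact_mod_cast hdet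
    nlinarith [this]
  · simp only [Matrix.cons_val', Matrix.cons_val_zero, Matrix.cons_val_one, Matrix.head_cons, Matrix.empty_val', Matrix.cons_val_fin_one, Matrix.of_apply, Matrix.vecHead]
    push_cast; ring

lemma conj_mem' (A : Matrix (Fin 2) (Fin 2) ℝ) (hA : A ∈ Gamma0R 9) :
    W93'⁻¹ * A * W93' ∈ Gamma0R 9 := by
  obtain ⟨a, b, d, m, hAeq, hdet⟩ := entries_eq A hA
  obtain ⟨k, hk⟩ := a_eq_d_mod3 a b d m hdet
  have ha : a = d + 3 * k := by omega
  subst ha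
  subst hAeq
  rw [W93'_inv]
  have hprod : !![(-1:ℝ), 2/3; -3, 1] * !![((d + 3*k : ℤ) : ℝ), b; 9*m, d] * W93' =
      !![((-(d+3*k) - 3*b + 6*m + 2*d : ℤ) : ℝ), ((2*k + b - 4*m : ℤ) : ℝ);
         ((9*(-k + m - b) : ℤ) : ℝ), ((2*(d+3*k) + 3*b - 6*m - d : ℤ) : ℝ)] := by
    ext i j
    fin_cases i <;> fin_cases j <;> simp [W93', Matrix.mul_fin_two] <;> push_cast <;> ring
  rw [hprod]
  refine ⟨?_, ?_, ⟨-k + m - b, ?_⟩⟩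
  · intro i j; fin_cases i <;> fin_cases j <;>
      [exact ⟨_, rfl⟩; exact ⟨_, rfl⟩; exact ⟨_, rfl⟩; exact ⟨_, rfl⟩]
  · rw [Matrix.det_fin_two_of]
    push_cast
    have : ((d:ℝ) + 3*k) * d - b * (9 * m) = 1 := by exact_mod_cast hdet
    nlinarith [this]
  · simp only [Matrix.cons_val', Matrix.cons_val_zero, Matrix.cons_val_one, Matrix.head_cons, Matrix.empty_val', Matrix.cons_val_fin_one, Matrix.of_apply, Matrix.vecHead]
    push_cast; ring

lemma invol (W : Matrix (Fin 2) (Fin 2) ℝ) (hW : W * W = -1) (B : Matrix (Fin 2) (Fin 2) ℝ) :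
    W⁻¹ * (W⁻¹ * B * W) * W = B := by
  have hinv : (W * W)⁻¹ = W⁻¹ * W⁻¹ := Matrix.mul_inv_rev W W
  have hneg : ((-1 : Matrix (Fin 2) (Fin 2) ℝ))⁻¹ = -1 := by
    apply Matrix.inv_eq_right_inv; simp
  calc W⁻¹ * (W⁻¹ * B * W) * W = (W⁻¹ * W⁻¹) * B * (W * W) := by
        noncomm_ring
    _ = (-1 : Matrix (Fin 2) (Fin 2) ℝ) * B * (-1) := by rw [← hinv, hW, hneg]
    _ = B := by simp

theorem W93_W93'_det_and_conj_Gamma0_nine :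
    W93.det = 1 ∧ W93'.det = 1 ∧
      (fun A => W93⁻¹ * A * W93) '' Gamma0R 9 = Gamma0R 9 ∧
      (fun A => W93'⁻¹ * A * W93') '' Gamma0R 9 = Gamma0R 9 := by
  refine ⟨W93_det, W93'_det, ?_, ?_⟩
  · apply Set.Subset.antisymm
    · rintro B ⟨A, hA, rfl⟩
      exact conj_mem A hA
    · intro B hB
      exact ⟨W93⁻¹ * B * W93, conj_mem B hB, invol W93 W93_sq B⟩
  · apply Set.Subset.antisymm
    · rintro B ⟨A, hA, rfl⟩
      exact conj_mem' A hA
    · intro B hB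
      exact ⟨W93'⁻¹ * B * W93', conj_mem' B hB, invol W93' W93'_sq B⟩
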